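/- arXiv:1310.5469 — 2 statements merged into one kernel-verified Lean document; each statement's English description precedes it below -/
import Mathlib

section
/- Let G be a connected F-graph with vertices u_1, ..., u_r, x_1, ..., x_p, y_1, ..., y_q (r ≥ 3, p ≥ 1, q ≥ 1) satisfying conditions (i)–(vi) of the definition of an F-graph, and let H be a square root of G. Then the graph obtained from H by deleting all edges u_iu_j with 4 ≤ i < j ≤ r is a square root of G in which u_4, ..., u_r are pendant vertices (if r ≥ 4). -/
open SimpleGraph

variable {V : Type*}

/-- The square of a graph `H`: two distinct vertices are adjacent iff
their distance in `H` is at most `2`, i.e. they are adjacent in `H` or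
have a common neighbor in `H`. -/
def squareGraph (H : SimpleGraph V) : SimpleGraph V where
  Adj a b := a ≠ b ∧ (H.Adj a b ∨ ∃ w, H.Adj a w ∧ H.Adj w b)
  symm := by
    constructor
    rintro a b ⟨hne, h | ⟨w, h1, h2⟩⟩
    · exact ⟨hne.symm, Or.inl h.symm⟩
    · exact ⟨hne.symm, Or.inr ⟨w, h2.symm, h1.symm⟩⟩
  loopless := by constructor; rintro a ⟨hne, -⟩; exact hne rfl

/-- `H` is a square root of `G` if `H² = G`. -/
def IsSquareRoot (H G : SimpleGraph V) : Prop := squareGraph H = G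

/-- A pendant vertex: a vertex with exactly one neighbor (degree 1). -/
def IsPendant (H : SimpleGraph V) (u : V) : Prop := ∃! w, H.Adj u w

/-- The closed neighborhood of a vertex. -/
def closedNbhd (G : SimpleGraph V) (u : V) : Set V := insert u (G.neighborSet u)

/-- Two vertices are true twins if their closed neighborhoods coincide. -/
def TrueTwins (G : SimpleGraph V) (u v : V) : Prop := closedNbhd G u = closedNbhd G v

/-- `S` is an `(X,Y)`-separator of `G`: every walk in `G` from a vertex of `X`
to a vertex of `Y` meets `S`, i.e. there is no path connecting `X` to `Y`
in the graph `G - S`. -/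
def IsSep (G : SimpleGraph V) (S X Y : Set V) : Prop :=
  ∀ x ∈ X, ∀ y ∈ Y, ∀ p : G.Walk x y, ∃ s ∈ p.support, s ∈ S

/-- `S` is a minimal `(X,Y)`-separator of `G`. -/
def IsMinSep (G : SimpleGraph V) (S X Y : Set V) : Prop :=
  IsSep G S X Y ∧ ∀ S' ⊂ S, ¬ IsSep G S' X Y

/-- `G` is an F-graph with F-triple `u 0, u 1, u 2`, remaining clique vertices
`u i` for `3 ≤ i`, and attachment vertices `x j` (neighbors of `u 0`) and
`y j` (neighbors of `u 2`). Here the paper's `u_1,...,u_r` is `u : Fin (r+3) → V`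
(so `r ≥ 3`), `x_1,...,x_p` is `x : Fin (p+1) → V` (so `p ≥ 1`) and
`y_1,...,y_q` is `y : Fin (q+1) → V` (so `q ≥ 1`). -/
def IsFGraph {r p q : ℕ} (G : SimpleGraph V) (u : Fin (r + 3) → V)
    (x : Fin (p + 1) → V) (y : Fin (q + 1) → V) : Prop :=
  -- (i) {u_1, ..., u_r} is a clique in G
  G.IsClique (Set.range u) ∧
  -- (ii) if r ≥ 4 then {u_1,u_2,u_3} is a minimal ({u_4,...,u_r}, V ∖ {u_1,...,u_r})-separator
  (4 ≤ r + 3 → IsMinSep G {u 0, u 1, u 2} (u '' {i | 3 ≤ (i : ℕ)}) (Set.range u)ᶜ) ∧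
  -- (iii) N_G(u_2) = {u_1, u_3, ..., u_r} ∪ {x_1,...,x_p} ∪ {y_1,...,y_q}
  G.neighborSet (u 1) = (u '' {i | i ≠ 1}) ∪ Set.range x ∪ Set.range y ∧
  -- (iv) N_G(u_1) ∩ N_G(u_3) = {u_2, u_4, ..., u_r}
  G.neighborSet (u 0) ∩ G.neighborSet (u 2) = u '' {i | i = 1 ∨ 3 ≤ (i : ℕ)} ∧
  -- (v)
  Set.range x ⊆ G.neighborSet (u 0) ∧
  Set.range y ⊆ G.neighborSet (u 2) ∧
  -- (vi)
  ∀ j k, ¬ G.Adj (x j) (y k)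

/-!
Write `a, b, c` for the F-triple `u 0, u 1, u 2` and `T` for the remaining clique vertices.
Since `a, b, c` separate `T` from the rest of `G`, every `G`-neighbour of a vertex of `T` is a
clique vertex. First, `b` is `H`-adjacent to no `x j` (nor `y k`): otherwise the `H`-path of
length at most two from `b` to `y 0` would make `x j` adjacent to `y 0` or produce a common
neighbour of `x j` and `y 0` in `N_G(b)`, and there is none. Next, no `t ∈ T` is `H`-adjacent
to `a`: the `H`-path from `a` to `x 0` cannot be an edge (then `t ~ x 0` in `G`), so its middle
vertex is a `G`-neighbour of `t`, hence a clique vertex, `G`-adjacent to `x 0` and different from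
`a`; only `b` qualifies, contradicting the first step. Symmetrically no `t ∈ T` is `H`-adjacent to `c`. Hence the `H`-neighbours of `t ∈ T` lie in
`T ∪ {b}`, and since `t ~ a` in `G = H²` the middle vertex of that path is `b`, so `t ~ b` in `H`.
Edges inside `T` are then redundant in the square (every two vertices of `T` have the common
neighbour `b`), and after deleting them `b` is the only neighbour of each `t ∈ T`.
-/

theorem Fin.eq_zero_or_eq_one_or_eq_two_or_three_le {r : ℕ} (k : Fin (r + 3)) :
    k = 0 ∨ k = 1 ∨ k = 2 ∨ 3 ≤ (k : ℕ) := by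
  simp only [Fin.ext_iff, Fin.val_zero, Fin.val_one, Fin.val_two]
  omega

theorem deleteEdges_pairs_eq_deleteEdges_sym2 {ι : Type*} (H : SimpleGraph V) (u : ι → V)
    (P : ι → Prop) :
    H.deleteEdges {e | ∃ i j, P i ∧ P j ∧ i ≠ j ∧ e = s(u i, u j)} =
      H.deleteEdges (u '' {i | P i}).sym2 := by
  ext v w
  simp only [deleteEdges_adj, and_congr_right_iff]
  intro hvw
  refine not_congr ⟨?_, ?_⟩
  · rintro ⟨i, j, hi, hj, -, he⟩
    rcases Sym2.eq_iff.1 he with ⟨rfl, rfl⟩ | ⟨rfl, rfl⟩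
    exacts [⟨⟨i, hi, rfl⟩, ⟨j, hj, rfl⟩⟩, ⟨⟨j, hj, rfl⟩, ⟨i, hi, rfl⟩⟩]
  · rintro ⟨⟨i, hi, rfl⟩, ⟨j, hj, rfl⟩⟩
    exact ⟨i, j, hi, hj, fun hij => hvw.ne (congrArg u hij), rfl⟩

section DeleteEdgesSym2

variable {H : SimpleGraph V} {T : Set V} {c : V}

theorem squareGraph_deleteEdges_sym2 (hc : c ∉ T) (hTc : ∀ t ∈ T, H.Adj t c)
    (hnbr : ∀ t ∈ T, ∀ w, H.Adj t w → w = c ∨ w ∈ T) :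
    squareGraph (H.deleteEdges T.sym2) = squareGraph H := by
  have hkeep : ∀ v w, H.Adj v w → ¬(v ∈ T ∧ w ∈ T) → (H.deleteEdges T.sym2).Adj v w :=
    fun v w h hvw => deleteEdges_adj.2 ⟨h, hvw⟩
  have hTc' : ∀ t ∈ T, (H.deleteEdges T.sym2).Adj t c :=
    fun t ht => hkeep t c (hTc t ht) fun h => hc h.2
  refine le_antisymm ?_ ?_
  · rintro v w ⟨hne, h | ⟨t, hvt, htw⟩⟩
    · exact ⟨hne, .inl (deleteEdges_le _ h)⟩
    · exact ⟨hne, .inr ⟨t, deleteEdges_le _ hvt, deleteEdges_le _ htw⟩⟩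
  rintro v w ⟨hne, hvw⟩
  refine ⟨hne, ?_⟩
  by_cases hT : v ∈ T ∧ w ∈ T
  · exact .inr ⟨c, hTc' v hT.1, (hTc' w hT.2).symm⟩
  rcases hvw with h | ⟨t, hvt, htw⟩
  · exact .inl (hkeep v w h hT)
  by_cases hvt' : v ∈ T ∧ t ∈ T
  · rcases hnbr t hvt'.2 w htw with rfl | hw
    exacts [.inl (hTc' v hvt'.1), absurd ⟨hvt'.1, hw⟩ hT]
  by_cases htw' : t ∈ T ∧ w ∈ T
  · rcases hnbr t htw'.1 v hvt.symm with rfl | hv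
    exacts [.inl (hTc' w htw'.2).symm, absurd ⟨hv, htw'.2⟩ hT]
  exact .inr ⟨t, hkeep v t hvt hvt', hkeep t w htw htw'⟩

theorem isPendant_deleteEdges_sym2 (hc : c ∉ T) (hTc : ∀ t ∈ T, H.Adj t c)
    (hnbr : ∀ t ∈ T, ∀ w, H.Adj t w → w = c ∨ w ∈ T) {t : V} (ht : t ∈ T) :
    IsPendant (H.deleteEdges T.sym2) t := by
  refine ⟨c, deleteEdges_adj.2 ⟨hTc t ht, fun h => hc h.2⟩, fun w hw => ?_⟩
  obtain ⟨htw, hwT⟩ := deleteEdges_adj.1 hw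
  exact (hnbr t ht w htw).resolve_right fun h => hwT ⟨ht, h⟩

end DeleteEdgesSym2

namespace IsSquareRoot

variable {G H : SimpleGraph V}

theorem adj_iff (hH : IsSquareRoot H G) {v w : V} :
    G.Adj v w ↔ v ≠ w ∧ (H.Adj v w ∨ ∃ t, H.Adj v t ∧ H.Adj t w) := by
  rw [← hH]
  rfl

theorem adj_of_adj (hH : IsSquareRoot H G) {v w : V} (h : H.Adj v w) : G.Adj v w :=
  hH.adj_iff.2 ⟨h.ne, .inl h⟩

theorem adj_of_adj_of_adj (hH : IsSquareRoot H G) {v t w : V} (hvt : H.Adj v t)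
    (htw : H.Adj t w) (hvw : v ≠ w) : G.Adj v w :=
  hH.adj_iff.2 ⟨hvw, .inr ⟨t, hvt, htw⟩⟩

theorem not_adj_of_no_common_neighbor {b x y : V} (hH : IsSquareRoot H G) (hxy : x ≠ y)
    (hGxy : ¬G.Adj x y) (hby : G.Adj b y)
    (hcommon : ∀ w, G.Adj b w → G.Adj w x → ¬G.Adj w y) : ¬H.Adj b x := by
  intro hbx
  obtain ⟨-, hby | ⟨w, hbw, hwy⟩⟩ := hH.adj_iff.1 hby
  · exact hGxy (hH.adj_of_adj_of_adj hbx.symm hby hxy)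
  · have hwx : w ≠ x := by
      rintro rfl
      exact hGxy (hH.adj_of_adj hwy)
    exact hcommon w (hH.adj_of_adj hbw) (hH.adj_of_adj_of_adj hbw.symm hbx hwx)
      (hH.adj_of_adj hwy)

theorem not_adj_of_forall_eq_or_eq {t a b x : V} (hH : IsSquareRoot H G) (htx : t ≠ x)
    (hGtx : ¬G.Adj t x) (hax : G.Adj a x) (hbx : ¬H.Adj b x)
    (hnbr : ∀ w, G.Adj t w → G.Adj w x → w = a ∨ w = b) : ¬H.Adj t a := by
  intro hta
  obtain ⟨-, hax | ⟨w, haw, hwx⟩⟩ := hH.adj_iff.1 hax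
  · exact hGtx (hH.adj_of_adj_of_adj hta hax htx)
  · have htw : t ≠ w := by
      rintro rfl
      exact hGtx (hH.adj_of_adj hwx)
    rcases hnbr w (hH.adj_of_adj_of_adj hta haw htw) (hH.adj_of_adj hwx) with rfl | rfl
    exacts [haw.ne rfl, hbx hwx]

end IsSquareRoot

namespace IsFGraph

variable {r p q : ℕ} {G : SimpleGraph V} {u : Fin (r + 3) → V} {x : Fin (p + 1) → V}
  {y : Fin (q + 1) → V}

theorem adj_zero_x (hF : IsFGraph G u x y) (j : Fin (p + 1)) : G.Adj (u 0) (x j) :=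
  hF.2.2.2.2.1 ⟨j, rfl⟩

theorem adj_two_y (hF : IsFGraph G u x y) (k : Fin (q + 1)) : G.Adj (u 2) (y k) :=
  hF.2.2.2.2.2.1 ⟨k, rfl⟩

theorem not_adj_x_y (hF : IsFGraph G u x y) (j : Fin (p + 1)) (k : Fin (q + 1)) :
    ¬G.Adj (x j) (y k) :=
  hF.2.2.2.2.2.2 j k

theorem mem_range_of_adj (hF : IsFGraph G u x y) (hu : Function.Injective u)
    {i : Fin (r + 3)} (hi : 3 ≤ (i : ℕ)) {w : V} (h : G.Adj (u i) w) : w ∈ Set.range u := by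
  by_contra hw
  obtain ⟨s, hs, hsS⟩ :=
    (hF.2.1 (by omega)).1 (u i) ⟨i, hi, rfl⟩ w hw (Walk.cons h Walk.nil)
  simp only [Walk.support_cons, Walk.support_nil, List.mem_cons, List.not_mem_nil,
    or_false] at hs
  simp only [Set.mem_insert_iff, Set.mem_singleton_iff] at hsS
  rcases hs with rfl | rfl
  · rcases hsS with h | h | h <;> rw [hu h] at hi <;>
      simp only [Fin.val_zero, Fin.val_one, Fin.val_two] at hi <;> omega
  · rcases hsS with rfl | rfl | rfl <;> exact hw ⟨_, rfl⟩

theorem not_adj_x (hF : IsFGraph G u x y) (hu : Function.Injective u)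
    (hux : ∀ i j, u i ≠ x j) {i : Fin (r + 3)} (hi : 3 ≤ (i : ℕ)) (j : Fin (p + 1)) :
    ¬G.Adj (u i) (x j) := fun h => by
  obtain ⟨k, hk⟩ := hF.mem_range_of_adj hu hi h
  exact hux k j hk

theorem not_adj_y (hF : IsFGraph G u x y) (hu : Function.Injective u)
    (huy : ∀ i j, u i ≠ y j) {i : Fin (r + 3)} (hi : 3 ≤ (i : ℕ)) (k : Fin (q + 1)) :
    ¬G.Adj (u i) (y k) := fun h => by
  obtain ⟨l, hl⟩ := hF.mem_range_of_adj hu hi h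
  exact huy l k hl

theorem not_adj_two_x (hF : IsFGraph G u x y) (hux : ∀ i j, u i ≠ x j) (j : Fin (p + 1)) :
    ¬G.Adj (u 2) (x j) := fun h => by
  have hmem : x j ∈ G.neighborSet (u 0) ∩ G.neighborSet (u 2) := ⟨hF.adj_zero_x j, h⟩
  rw [hF.2.2.2.1] at hmem
  obtain ⟨k, -, hk⟩ := hmem
  exact hux k j hk

theorem not_adj_zero_y (hF : IsFGraph G u x y) (huy : ∀ i j, u i ≠ y j) (k : Fin (q + 1)) :
    ¬G.Adj (u 0) (y k) := fun h => by
  have hmem : y k ∈ G.neighborSet (u 0) ∩ G.neighborSet (u 2) := ⟨h, hF.adj_two_y k⟩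
  rw [hF.2.2.2.1] at hmem
  obtain ⟨l, -, hl⟩ := hmem
  exact huy l k hl

theorem adj_one_x (hF : IsFGraph G u x y) (j : Fin (p + 1)) : G.Adj (u 1) (x j) := by
  change x j ∈ G.neighborSet (u 1)
  rw [hF.2.2.1]
  exact .inl (.inr ⟨j, rfl⟩)

theorem adj_one_y (hF : IsFGraph G u x y) (k : Fin (q + 1)) : G.Adj (u 1) (y k) := by
  change y k ∈ G.neighborSet (u 1)
  rw [hF.2.2.1]
  exact .inr ⟨k, rfl⟩

theorem not_adj_y_of_adj_one_of_adj_x (hF : IsFGraph G u x y) (hu : Function.Injective u)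
    (hux : ∀ i j, u i ≠ x j) (huy : ∀ i j, u i ≠ y j) {w : V} {j : Fin (p + 1)}
    {k : Fin (q + 1)} (hw : G.Adj (u 1) w) (hwx : G.Adj w (x j)) : ¬G.Adj w (y k) := by
  change w ∈ G.neighborSet (u 1) at hw
  rw [hF.2.2.1] at hw
  rcases hw with (⟨l, hl1, rfl⟩ | ⟨j', rfl⟩) | ⟨k', rfl⟩
  · rcases Fin.eq_zero_or_eq_one_or_eq_two_or_three_le l with rfl | rfl | rfl | hl
    · exact hF.not_adj_zero_y huy k
    · exact absurd rfl hl1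
    · exact absurd hwx (hF.not_adj_two_x hux j)
    · exact absurd hwx (hF.not_adj_x hu hux hl j)
  · exact hF.not_adj_x_y j' k
  · exact absurd hwx.symm (hF.not_adj_x_y j k')

variable {H : SimpleGraph V}

theorem not_adj_one_x (hF : IsFGraph G u x y) (hH : IsSquareRoot H G)
    (hu : Function.Injective u) (hux : ∀ i j, u i ≠ x j) (huy : ∀ i j, u i ≠ y j)
    (hxy : ∀ i j, x i ≠ y j) (j : Fin (p + 1)) : ¬H.Adj (u 1) (x j) :=
  hH.not_adj_of_no_common_neighbor (hxy j 0) (hF.not_adj_x_y j 0) (hF.adj_one_y 0)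
    fun _ hw hwx => hF.not_adj_y_of_adj_one_of_adj_x hu hux huy hw hwx

theorem not_adj_one_y (hF : IsFGraph G u x y) (hH : IsSquareRoot H G)
    (hu : Function.Injective u) (hux : ∀ i j, u i ≠ x j) (huy : ∀ i j, u i ≠ y j)
    (hxy : ∀ i j, x i ≠ y j) (k : Fin (q + 1)) : ¬H.Adj (u 1) (y k) :=
  hH.not_adj_of_no_common_neighbor (hxy 0 k).symm (fun h => hF.not_adj_x_y 0 k h.symm)
    (hF.adj_one_x 0) fun _ hw hwy hwx => hF.not_adj_y_of_adj_one_of_adj_x hu hux huy hw hwx hwy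

theorem not_adj_zero (hF : IsFGraph G u x y) (hH : IsSquareRoot H G)
    (hu : Function.Injective u) (hux : ∀ i j, u i ≠ x j) (huy : ∀ i j, u i ≠ y j)
    (hxy : ∀ i j, x i ≠ y j) {i : Fin (r + 3)} (hi : 3 ≤ (i : ℕ)) :
    ¬H.Adj (u i) (u 0) := by
  refine hH.not_adj_of_forall_eq_or_eq (hux i 0) (hF.not_adj_x hu hux hi 0)
    (hF.adj_zero_x 0) (hF.not_adj_one_x hH hu hux huy hxy 0) fun w hw hwx => ?_
  obtain ⟨l, rfl⟩ := hF.mem_range_of_adj hu hi hw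
  rcases Fin.eq_zero_or_eq_one_or_eq_two_or_three_le l with rfl | rfl | rfl | hl
  exacts [.inl rfl, .inr rfl, absurd hwx (hF.not_adj_two_x hux 0),
    absurd hwx (hF.not_adj_x hu hux hl 0)]

theorem not_adj_two (hF : IsFGraph G u x y) (hH : IsSquareRoot H G)
    (hu : Function.Injective u) (hux : ∀ i j, u i ≠ x j) (huy : ∀ i j, u i ≠ y j)
    (hxy : ∀ i j, x i ≠ y j) {i : Fin (r + 3)} (hi : 3 ≤ (i : ℕ)) :
    ¬H.Adj (u i) (u 2) := by
  refine hH.not_adj_of_forall_eq_or_eq (huy i 0) (hF.not_adj_y hu huy hi 0)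
    (hF.adj_two_y 0) (hF.not_adj_one_y hH hu hux huy hxy 0) fun w hw hwy => ?_
  obtain ⟨l, rfl⟩ := hF.mem_range_of_adj hu hi hw
  rcases Fin.eq_zero_or_eq_one_or_eq_two_or_three_le l with rfl | rfl | rfl | hl
  exacts [absurd hwy (hF.not_adj_zero_y huy 0), .inr rfl, .inl rfl,
    absurd hwy (hF.not_adj_y hu huy hl 0)]

theorem eq_one_or_mem_of_adj (hF : IsFGraph G u x y) (hH : IsSquareRoot H G)
    (hu : Function.Injective u) (hux : ∀ i j, u i ≠ x j) (huy : ∀ i j, u i ≠ y j)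
    (hxy : ∀ i j, x i ≠ y j) {i : Fin (r + 3)} (hi : 3 ≤ (i : ℕ)) {w : V}
    (h : H.Adj (u i) w) : w = u 1 ∨ w ∈ u '' {i | 3 ≤ (i : ℕ)} := by
  obtain ⟨l, rfl⟩ := hF.mem_range_of_adj hu hi (hH.adj_of_adj h)
  rcases Fin.eq_zero_or_eq_one_or_eq_two_or_three_le l with rfl | rfl | rfl | hl
  exacts [absurd h (hF.not_adj_zero hH hu hux huy hxy hi), .inl rfl,
    absurd h (hF.not_adj_two hH hu hux huy hxy hi), .inr ⟨l, hl, rfl⟩]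

theorem adj_one (hF : IsFGraph G u x y) (hH : IsSquareRoot H G)
    (hu : Function.Injective u) (hux : ∀ i j, u i ≠ x j) (huy : ∀ i j, u i ≠ y j)
    (hxy : ∀ i j, x i ≠ y j) {i : Fin (r + 3)} (hi : 3 ≤ (i : ℕ)) : H.Adj (u i) (u 1) := by
  have hi0 : u i ≠ u 0 := fun h => by simp [hu h] at hi
  obtain ⟨-, h | ⟨w, hiw, hw0⟩⟩ := hH.adj_iff.1 (hF.1 ⟨i, rfl⟩ ⟨0, rfl⟩ hi0)
  · exact absurd h (hF.not_adj_zero hH hu hux huy hxy hi)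
  rcases hF.eq_one_or_mem_of_adj hH hu hux huy hxy hi hiw with rfl | ⟨j, hj, rfl⟩
  exacts [hiw, absurd hw0 (hF.not_adj_zero hH hu hux huy hxy hj)]

end IsFGraph

theorem root_of_FGraph_delete_edges_general {r p q : ℕ}
    (G H : SimpleGraph V)
    (u : Fin (r + 3) → V) (x : Fin (p + 1) → V) (y : Fin (q + 1) → V)
    (hu : Function.Injective u)
    (hux : ∀ i j, u i ≠ x j) (huy : ∀ i j, u i ≠ y j) (hxy : ∀ i j, x i ≠ y j)
    (hF : IsFGraph G u x y)
    (hH : IsSquareRoot H G) :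
    IsSquareRoot (H.deleteEdges
      {e | ∃ i j : Fin (r + 3), 3 ≤ (i : ℕ) ∧ 3 ≤ (j : ℕ) ∧ i ≠ j ∧ e = s(u i, u j)}) G ∧
    ∀ i : Fin (r + 3), 3 ≤ (i : ℕ) → IsPendant (H.deleteEdges
      {e | ∃ i j : Fin (r + 3), 3 ≤ (i : ℕ) ∧ 3 ≤ (j : ℕ) ∧ i ≠ j ∧ e = s(u i, u j)}) (u i) := by
  rw [deleteEdges_pairs_eq_deleteEdges_sym2 H u (fun i : Fin (r + 3) => 3 ≤ (i : ℕ))]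
  set T := u '' {i : Fin (r + 3) | 3 ≤ (i : ℕ)}
  have hc : u 1 ∉ T := by
    rintro ⟨i, hi, h⟩
    simp [hu h] at hi
  have hTc : ∀ t ∈ T, H.Adj t (u 1) := by
    rintro _ ⟨i, hi, rfl⟩
    exact hF.adj_one hH hu hux huy hxy hi
  have hnbr : ∀ t ∈ T, ∀ w, H.Adj t w → w = u 1 ∨ w ∈ T := by
    rintro _ ⟨i, hi, rfl⟩ w
    exact hF.eq_one_or_mem_of_adj hH hu hux huy hxy hi
  exact ⟨(squareGraph_deleteEdges_sym2 hc hTc hnbr).trans hH,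
    fun i hi => isPendant_deleteEdges_sym2 hc hTc hnbr ⟨i, hi, rfl⟩⟩

/-- Lemma 4, second part. Here the paper's `u_1, ..., u_r` (`r ≥ 3`) is
`u : Fin (r+3) → V`, `x_1, ..., x_p` (`p ≥ 1`) is `x : Fin (p+1) → V`, and
`y_1, ..., y_q` (`q ≥ 1`) is `y : Fin (q+1) → V`; all these vertices are distinct.
Deleting from `H` all edges `u_iu_j` with `4 ≤ i < j ≤ r` yields a square root of
`G` in which `u_4, ..., u_r` are pendant vertices. -/
theorem root_of_FGraph_delete_edges {r p q : ℕ}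
    (G H : SimpleGraph V) (hG : G.Connected)
    (u : Fin (r + 3) → V) (x : Fin (p + 1) → V) (y : Fin (q + 1) → V)
    (hu : Function.Injective u) (hx : Function.Injective x) (hy : Function.Injective y)
    (hux : ∀ i j, u i ≠ x j) (huy : ∀ i j, u i ≠ y j) (hxy : ∀ i j, x i ≠ y j)
    (hF : IsFGraph G u x y)
    (hH : IsSquareRoot H G) :
    IsSquareRoot (H.deleteEdges
      {e | ∃ i j : Fin (r + 3), 3 ≤ (i : ℕ) ∧ 3 ≤ (j : ℕ) ∧ i ≠ j ∧ e = s(u i, u j)}) G ∧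
    ∀ i : Fin (r + 3), 3 ≤ (i : ℕ) → IsPendant (H.deleteEdges
      {e | ∃ i j : Fin (r + 3), 3 ≤ (i : ℕ) ∧ 3 ≤ (j : ℕ) ∧ i ≠ j ∧ e = s(u i, u j)}) (u i) :=
  root_of_FGraph_delete_edges_general G H u x y hu hux huy hxy hF hH
end

section
/- If G is a connected graph on at least three vertices that has a square root, then G is 2-connected, i.e., G has no separator consisting of a single vertex (removing any single vertex leaves G connected). -/
open SimpleGraph

variable {V : Type*}

/-
Let `G = H²` and `x, y ≠ v`. Follow an `H`-walk from `x` to `y` (it exists since `H²`-adjacent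
vertices are `H`-reachable). Each of its steps avoiding `v` is an edge of `G - v`, and each
detour `a - v - d` through `v` can be shortcut by the edge `a d` of `H²`, which avoids `v`.
-/

theorem SimpleGraph.Preconnected.induce_ne_of_le {G H : SimpleGraph V} (hH : H.Preconnected)
    (hle : H ≤ G) (v : V) (hv : ∀ a b, H.Adj a v → H.Adj b v → a ≠ b → G.Adj a b) :
    (G.induce {w | w ≠ v}).Preconnected := by
  set G' := G.induce {w | w ≠ v}
  have reach_of_adj : ∀ {a b} (ha : a ≠ v) (hb : b ≠ v), G.Adj a b →
      G'.Reachable ⟨a, ha⟩ ⟨b, hb⟩ := fun _ _ h => Adj.reachable (G := G') h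
  -- Invariant along the walk: the current vertex `u` is the start `x`, or `u = v` and the
  -- start `x` is an `H`-neighbour of `v` from which the walk just arrived.
  have reachable_along : ∀ {u y} (p : H.Walk u y) (hy : y ≠ v) (x) (hx : x ≠ v),
      (x = u ∨ H.Adj x v ∧ u = v) → G'.Reachable ⟨x, hx⟩ ⟨y, hy⟩ := by
    intro u y p
    induction p with
    | nil =>
      rintro hy x hx (rfl | ⟨-, huv⟩)
      · rfl
      · exact absurd huv hy
    | @cons u c y h q ih =>
      rintro hy x hx (rfl | ⟨hxv, huv⟩)
      · by_cases hc : c = v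
        · subst hc
          exact ih hy x hx (Or.inr ⟨h, rfl⟩)
        · exact (reach_of_adj hx hc (hle h)).trans (ih hy c hc (Or.inl rfl))
      · subst u
        have hc : c ≠ v := h.ne'
        by_cases hxc : x = c
        · exact ih hy x hx (Or.inl hxc)
        · exact (reach_of_adj hx hc (hv x c hxv h.symm hxc)).trans (ih hy c hc (Or.inl rfl))
  rintro ⟨x, hx⟩ ⟨y, hy⟩
  exact reachable_along (hH x y).some hy x hx (Or.inl rfl)

lemma le_squareGraph (H : SimpleGraph V) : H ≤ squareGraph H :=
  fun _ _ h => ⟨h.ne, Or.inl h⟩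

lemma squareGraph_adj_of_adj_of_adj {H : SimpleGraph V} {a b v : V} (ha : H.Adj a v)
    (hb : H.Adj b v) (hab : a ≠ b) : (squareGraph H).Adj a b :=
  ⟨hab, Or.inr ⟨v, ha, hb.symm⟩⟩

lemma reachable_of_squareGraph_reachable {H : SimpleGraph V} {a b : V}
    (h : (squareGraph H).Reachable a b) : H.Reachable a b := by
  rw [reachable_iff_reflTransGen] at h ⊢
  refine Relation.ReflTransGen.lift' id ?_ _ _ h
  rintro a b ⟨-, hab | ⟨w, haw, hwb⟩⟩
  · exact .single hab
  · exact .tail (.single haw) hwb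

/-- A connected graph on at least three vertices that has a square root is
2-connected: deleting any single vertex leaves the graph connected. -/
theorem connected_with_root_is_two_connected (G : SimpleGraph V) (hG : G.Connected)
    (h3 : ∃ a b c : V, a ≠ b ∧ a ≠ c ∧ b ≠ c)
    (hroot : ∃ H : SimpleGraph V, IsSquareRoot H G) :
    ∀ v : V, (G.induce {w : V | w ≠ v}).Connected := by
  intro v
  obtain ⟨H, rfl⟩ := hroot
  have hH : H.Preconnected := fun x y => reachable_of_squareGraph_reachable (hG.preconnected x y)
  obtain ⟨a, b, -, hab, -, -⟩ := h3
  have hne : Nonempty {w : V | w ≠ v} :=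
    (hab.ne_or_ne v).elim (fun ha => ⟨⟨a, ha⟩⟩) fun hb => ⟨⟨b, hb⟩⟩
  exact (connected_iff _).mpr
    ⟨hH.induce_ne_of_le (le_squareGraph H) v fun _ _ => squareGraph_adj_of_adj_of_adj, hne⟩
end
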